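/- arXiv:2312.14975 — 6 statements merged into one kernel-verified Lean document; each statement's English description precedes it below -/
import Mathlib

section
/- Let d ≥ 1, σ > 0, and let u : ℝ^d → ℝ be bounded and measurable. Then the gradient of the Gaussian smoothing f of u admits the antithetic representation ∇f(x) = ∫_{ℝ^d} (z/(2σ²)) · (u(x+z) − u(x−z)) ρ_σ(z) dz for every x ∈ ℝ^d. -/
/-!
Write `f(t) = ∫ u(y) ρ_σ(y - t) dy`, so that `t` enters only through the smooth kernel. Since
`∇ρ_σ(w) = -(ρ_σ(w)/σ²) w` is dominated, uniformly over shifts `‖h‖ ≤ 1`, by an integrable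
Gaussian, and `u` is bounded, one may differentiate under the integral; this gives Stein's
identity `∇f(x) = ∫ u(x+z) (ρ_σ(z)/σ²) z dz`. The antithetic form is the average of this integral
and its image under `z ↦ -z`, which leaves the even density `ρ_σ` unchanged.
-/

open MeasureTheory Real

noncomputable def gaussDensity (d : ℕ) (σ : ℝ) (z : EuclideanSpace ℝ (Fin d)) : ℝ :=
  (2 * Real.pi * σ ^ 2) ^ (-(d : ℝ) / 2) * Real.exp (-‖z‖ ^ 2 / (2 * σ ^ 2))

noncomputable def gaussSmooth (d : ℕ) (σ : ℝ) (u : EuclideanSpace ℝ (Fin d) → ℝ)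
    (x : EuclideanSpace ℝ (Fin d)) : ℝ :=
  ∫ z, u (x + z) * gaussDensity d σ z

open InnerProductSpace

theorem mul_exp_neg_mul_sq_le {b : ℝ} (hb : 0 < b) (t : ℝ) :
    t * rexp (-b * t ^ 2) ≤ (1 + (2 * b)⁻¹) * rexp (-(b / 2) * t ^ 2) := by
  have hamgm : t ≤ (2 * b)⁻¹ + b / 2 * t ^ 2 := by
    have h2b : 0 < 2 * b := by positivity
    rw [← mul_le_mul_iff_of_pos_left h2b, mul_add, mul_inv_cancel₀ h2b.ne']
    nlinarith [sq_nonneg (b * t - 1)]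
  have hlin : t ≤ (1 + (2 * b)⁻¹) * rexp (b / 2 * t ^ 2) := by
    have hk : 0 ≤ (2 * b)⁻¹ := by positivity
    have hbt : 0 ≤ b / 2 * t ^ 2 := by positivity
    calc t ≤ (1 + (2 * b)⁻¹) * (b / 2 * t ^ 2 + 1) := by nlinarith
      _ ≤ (1 + (2 * b)⁻¹) * rexp (b / 2 * t ^ 2) := by gcongr; exact add_one_le_exp _
  calc t * rexp (-b * t ^ 2)
      ≤ (1 + (2 * b)⁻¹) * rexp (b / 2 * t ^ 2) * rexp (-b * t ^ 2) := by gcongr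
    _ = (1 + (2 * b)⁻¹) * rexp (-(b / 2) * t ^ 2) := by
      rw [mul_assoc, ← exp_add]; ring_nf

theorem exp_neg_mul_sq_norm_add_le {E : Type*} [SeminormedAddCommGroup E] {c : ℝ} (hc : 0 ≤ c)
    {h : E} (hh : ‖h‖ ≤ 1) (z : E) :
    rexp (-c * ‖z + h‖ ^ 2) ≤ rexp c * rexp (-(c / 2) * ‖z‖ ^ 2) := by
  rw [← exp_add, exp_le_exp]
  have htri : ‖z‖ ≤ ‖z + h‖ + 1 := by
    calc ‖z‖ = ‖(z + h) - h‖ := by rw [add_sub_cancel_right]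
      _ ≤ ‖z + h‖ + ‖h‖ := norm_sub_le _ _
      _ ≤ ‖z + h‖ + 1 := by gcongr
  have hsq : ‖z‖ ^ 2 ≤ 2 * ‖z + h‖ ^ 2 + 2 := by
    nlinarith [norm_nonneg z, norm_nonneg (z + h), sq_nonneg (‖z + h‖ - 1)]
  nlinarith

theorem integrable_exp_neg_mul_sq_norm {V : Type*} [NormedAddCommGroup V] [InnerProductSpace ℝ V]
    [FiniteDimensional ℝ V] [MeasurableSpace V] [BorelSpace V] {b : ℝ} (hb : 0 < b) :
    Integrable (fun v : V => rexp (-b * ‖v‖ ^ 2)) := by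
  have := (GaussianFourier.integrable_cexp_neg_mul_sq_norm_add (V := V) (b := b)
    (by simpa using hb) 0 0).norm
  convert this using 2 with v
  rw [Complex.norm_exp]
  simp [← Complex.ofReal_pow]

theorem integral_add_comp_neg {G F : Type*} [MeasurableSpace G] [AddGroup G] [MeasurableNeg G]
    [NormedAddCommGroup F] [NormedSpace ℝ F] {μ : Measure G} [μ.IsNegInvariant] {f : G → F}
    (hf : Integrable f μ) : ∫ z, (f z + f (-z)) ∂μ = (2 : ℝ) • ∫ z, f z ∂μ := by
  rw [integral_add hf hf.comp_neg, integral_neg_eq_self, two_smul]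

section Smoothing

variable {E : Type*} [NormedAddCommGroup E] [InnerProductSpace ℝ E] [CompleteSpace E]

theorem hasFDerivAt_mul_comp_const_sub {g : E → ℝ} {w y t : E} (hg : HasGradientAt g w (y - t))
    (c : ℝ) : HasFDerivAt (fun s => c * g (y - s)) (toDual ℝ E (-(c • w))) t := by
  have := ((hg.hasFDerivAt.comp t ((hasFDerivAt_id t).const_sub y))).const_mul c
  refine this.congr_fderiv ?_
  ext v
  simp

variable [SecondCountableTopology E] [MeasurableSpace E] [BorelSpace E]
  {μ : Measure E} [μ.IsAddRightInvariant]

theorem hasGradientAt_integral_mul_comp_add {u g G : E → ℝ} {g' : E → E} {M : ℝ}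
    (hu : Measurable u) (hM : ∀ y, |u y| ≤ M)
    (hg : ∀ z, HasGradientAt g (g' z) z) (hg' : Continuous g') (hg_int : Integrable g μ)
    (hG : Integrable G μ) (hg'G : ∀ z h, ‖h‖ ≤ 1 → ‖g' (z + h)‖ ≤ G z) (x : E) :
    HasGradientAt (fun t => ∫ z, u (t + z) * g z ∂μ) (-∫ z, u (x + z) • g' z ∂μ) x := by
  have hg_cont : Continuous g := continuous_iff_continuousAt.2 fun z => (hg z).continuousAt
  have hF_meas : ∀ t, AEStronglyMeasurable (fun y => u y * g (y - t)) μ := fun t =>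
    hu.aestronglyMeasurable.mul (hg_cont.comp (continuous_sub_right t)).aestronglyMeasurable
  have hF' := hasFDerivAt_integral_of_dominated_of_fderiv_le (μ := μ)
    (F := fun t y => u y * g (y - t)) (F' := fun t y => toDual ℝ E (-(u y • g' (y - t))))
    (bound := fun y => M * G (y - x)) (Metric.ball_mem_nhds x one_pos)
    (.of_forall hF_meas)
    ((hg_int.comp_sub_right x).bdd_mul (hu.aestronglyMeasurable) (.of_forall hM))
    ((toDual ℝ E).continuous.comp_aestronglyMeasurable
      (hu.aestronglyMeasurable.smul (hg'.comp (continuous_sub_right x)).aestronglyMeasurable).neg)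
    (.of_forall fun y t ht => ?bound) ((hG.comp_sub_right x).const_mul M)
    (.of_forall fun y t _ => hasFDerivAt_mul_comp_const_sub (hg (y - t)) (u y))
  case bound =>
    have hxt : ‖x - t‖ ≤ 1 := by
      rw [← dist_eq_norm, dist_comm]; exact (Metric.mem_ball.1 ht).le
    rw [LinearIsometryEquiv.norm_map, norm_neg, norm_smul, Real.norm_eq_abs,
      show y - t = (y - x) + (x - t) by abel]
    exact mul_le_mul (hM y) (hg'G _ _ hxt) (norm_nonneg _) ((abs_nonneg _).trans (hM y))
  have hf : (fun t => ∫ y, u y * g (y - t) ∂μ) = fun t => ∫ z, u (t + z) * g z ∂μ := by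
    funext t
    rw [← integral_sub_right_eq_self (fun z => u (t + z) * g z) t]
    simp only [add_sub_cancel]
  have hderiv : ∫ y, toDual ℝ E (-(u y • g' (y - x))) ∂μ =
      toDual ℝ E (-∫ z, u (x + z) • g' z ∂μ) := by
    rw [← integral_sub_right_eq_self (fun z => u (x + z) • g' z) x, ← integral_neg]
    simp only [add_sub_cancel]
    exact (toDual ℝ E).toLinearIsometry.integral_comp_comm _
  rw [hf, hderiv] at hF'
  exact hF'

end Smoothing

section GaussianDensity

variable {d : ℕ} {σ : ℝ}

theorem gaussDensity_eq (d : ℕ) (σ : ℝ) (z : EuclideanSpace ℝ (Fin d)) :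
    gaussDensity d σ z = (2 * π * σ ^ 2) ^ (-(d : ℝ) / 2) * rexp (-(2 * σ ^ 2)⁻¹ * ‖z‖ ^ 2) := by
  rw [gaussDensity]; congr 2; ring

theorem gaussDensity_neg (z : EuclideanSpace ℝ (Fin d)) :
    gaussDensity d σ (-z) = gaussDensity d σ z := by
  rw [gaussDensity, gaussDensity, norm_neg]

@[fun_prop]
theorem continuous_gaussDensity : Continuous (gaussDensity d σ) := by
  unfold gaussDensity; fun_prop

theorem integrable_gaussDensity (hσ : σ ≠ 0) : Integrable (gaussDensity d σ) := by
  simp_rw [funext (gaussDensity_eq d σ)]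
  exact (integrable_exp_neg_mul_sq_norm (by positivity)).const_mul _

theorem hasGradientAt_gaussDensity (z : EuclideanSpace ℝ (Fin d)) :
    HasGradientAt (gaussDensity d σ) (-(gaussDensity d σ z / σ ^ 2) • z) z := by
  have := (((hasStrictFDerivAt_norm_sq z).hasFDerivAt.const_mul (-(2 * σ ^ 2)⁻¹)).exp).const_mul
    ((2 * π * σ ^ 2) ^ (-(d : ℝ) / 2))
  rw [hasGradientAt_iff_hasFDerivAt, funext (gaussDensity_eq d σ)]
  refine this.congr_fderiv ?_
  ext v
  simp
  ring

theorem exists_integrable_bound_gradient_gaussDensity (hσ : σ ≠ 0) :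
    ∃ G : EuclideanSpace ℝ (Fin d) → ℝ, Integrable G ∧ ∀ z h, ‖h‖ ≤ 1 →
      ‖-(gaussDensity d σ (z + h) / σ ^ 2) • (z + h)‖ ≤ G z := by
  set C := (2 * π * σ ^ 2) ^ (-(d : ℝ) / 2)
  set b := (2 * σ ^ 2)⁻¹
  have hb : 0 < b := by positivity
  have hC : 0 ≤ C / σ ^ 2 := by positivity
  refine ⟨fun z => C / σ ^ 2 * (1 + (2 * b)⁻¹) * rexp (b / 2) * rexp (-(b / 2 / 2) * ‖z‖ ^ 2),
    (integrable_exp_neg_mul_sq_norm (by positivity)).const_mul _, fun z h hh => ?_⟩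
  calc ‖-(gaussDensity d σ (z + h) / σ ^ 2) • (z + h)‖
      = C / σ ^ 2 * (‖z + h‖ * rexp (-b * ‖z + h‖ ^ 2)) := by
        rw [norm_smul, norm_neg, gaussDensity_eq, Real.norm_of_nonneg (by positivity)]; ring
    _ ≤ C / σ ^ 2 * ((1 + (2 * b)⁻¹) * rexp (-(b / 2) * ‖z + h‖ ^ 2)) :=
        mul_le_mul_of_nonneg_left (mul_exp_neg_mul_sq_le hb _) hC
    _ ≤ C / σ ^ 2 * ((1 + (2 * b)⁻¹) * (rexp (b / 2) * rexp (-(b / 2 / 2) * ‖z‖ ^ 2))) := by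
        gcongr; exact exp_neg_mul_sq_norm_add_le (half_pos hb).le hh z
    _ = _ := by ring

theorem integrable_gaussDensity_div_smul (hσ : σ ≠ 0) :
    Integrable (fun z => (gaussDensity d σ z / σ ^ 2) • z) := by
  obtain ⟨G, hG, hbound⟩ := exists_integrable_bound_gradient_gaussDensity (d := d) hσ
  refine hG.mono' (by fun_prop) (.of_forall fun z => ?_)
  simpa using hbound z 0 (by simp)

theorem hasGradientAt_gaussSmooth (hσ : σ ≠ 0) {u : EuclideanSpace ℝ (Fin d) → ℝ} {M : ℝ}
    (hu : Measurable u) (hM : ∀ y, |u y| ≤ M) (x : EuclideanSpace ℝ (Fin d)) :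
    HasGradientAt (gaussSmooth d σ u)
      (∫ z, u (x + z) • (gaussDensity d σ z / σ ^ 2) • z) x := by
  obtain ⟨G, hG, hbound⟩ := exists_integrable_bound_gradient_gaussDensity (d := d) hσ
  have := hasGradientAt_integral_mul_comp_add hu hM hasGradientAt_gaussDensity (by fun_prop)
    (integrable_gaussDensity hσ) hG hbound x
  simp only [neg_smul, smul_neg, integral_neg, neg_neg] at this
  exact this

end GaussianDensity

theorem gaussSmooth_hasGradientAt_antithetic_general
    (d : ℕ) (σ : ℝ) (hσ : 0 < σ)
    (u : EuclideanSpace ℝ (Fin d) → ℝ)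
    (hu_meas : Measurable u) (hu_bdd : ∃ M : ℝ, ∀ x, |u x| ≤ M)
    (x : EuclideanSpace ℝ (Fin d)) :
    HasGradientAt (gaussSmooth d σ u)
      (∫ z, (((u (x + z) - u (x - z)) / (2 * σ ^ 2)) * gaussDensity d σ z) • z) x := by
  obtain ⟨M, hM⟩ := hu_bdd
  set φ := fun z => u (x + z) • (gaussDensity d σ z / σ ^ 2) • z
  have hφ : Integrable φ := (integrable_gaussDensity_div_smul hσ.ne').bdd_smul M
    (hu_meas.comp (measurable_const_add x)).aestronglyMeasurable (.of_forall fun z => hM _)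
  have hsymm : (fun z => (((u (x + z) - u (x - z)) / (2 * σ ^ 2)) * gaussDensity d σ z) • z) =
      fun z => (2 : ℝ)⁻¹ • (φ z + φ (-z)) := by
    funext z
    simp only [φ, gaussDensity_neg, ← sub_eq_add_neg, smul_neg, smul_smul, ← sub_smul]
    congr 1
    ring
  rw [hsymm, integral_smul, integral_add_comp_neg hφ, smul_smul, inv_mul_cancel₀ two_ne_zero,
    one_smul]
  exact hasGradientAt_gaussSmooth hσ.ne' hu_meas hM x

/-- antithetic representation of the gradient of the Gaussian smoothing:
`∇f(x) = ∫ (z/(2σ²)) (u(x+z) − u(x−z)) ρ_σ(z) dz`. -/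
theorem gaussSmooth_hasGradientAt_antithetic
    (d : ℕ) (hd : 1 ≤ d) (σ : ℝ) (hσ : 0 < σ)
    (u : EuclideanSpace ℝ (Fin d) → ℝ)
    (hu_meas : Measurable u) (hu_bdd : ∃ M : ℝ, ∀ x, |u x| ≤ M)
    (x : EuclideanSpace ℝ (Fin d)) :
    HasGradientAt (gaussSmooth d σ u)
      (∫ z, (((u (x + z) - u (x - z)) / (2 * σ ^ 2)) * gaussDensity d σ z) • z) x :=
  gaussSmooth_hasGradientAt_antithetic_general d σ hσ u hu_meas hu_bdd x
end

section
/- Let G be an N×N complex matrix with G² = I, let C be an N×N Hermitian complex matrix, and for x ∈ ℝ set M(x) = exp(−(i x/2) G). Then for every x ∈ ℝ, M(x)† C M(x) = A + B cos x + D sin x, where A = (G† C G + C)/2, B = (C − G† C G)/2, and D = (i/2)(G† C − C G). -/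
set_option maxHeartbeats 1000000


open Complex Matrix

lemma exp_smul_involutory {N : ℕ} (G : Matrix (Fin N) (Fin N) ℂ) (hG : G * G = 1) (z : ℂ) :
    NormedSpace.exp ((-(z * Complex.I)) • G)
      = Complex.cos z • (1 : Matrix (Fin N) (Fin N) ℂ) + (-(Complex.sin z * Complex.I)) • G := by
  letI : SeminormedRing (Matrix (Fin N) (Fin N) ℂ) := Matrix.linftyOpSemiNormedRing
  letI : NormedRing (Matrix (Fin N) (Fin N) ℂ) := Matrix.linftyOpNormedRing
  letI : NormedAlgebra ℂ (Matrix (Fin N) (Fin N) ℂ) := Matrix.linftyOpNormedAlgebra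
  have hG2 : ∀ k : ℕ, G ^ (2 * k) = 1 := fun k => by
    rw [pow_mul, pow_two, hG, one_pow]
  have hG2' : ∀ k : ℕ, G ^ (2 * k + 1) = G := fun k => by
    rw [pow_succ, hG2, one_mul]
  have heven : HasSum
      (fun k : ℕ => ((Nat.factorial (2 * k) : ℂ))⁻¹ • ((-(z * Complex.I)) • G) ^ (2 * k))
      (Complex.cos z • (1 : Matrix (Fin N) (Fin N) ℂ)) := by
    have h := (Complex.hasSum_cos' z).smul_const (1 : Matrix (Fin N) (Fin N) ℂ)
    convert h using 2 with k
    rw [smul_pow, hG2, smul_smul, Even.neg_pow (even_two_mul k)]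
    congr 1
    rw [div_eq_inv_mul]
  have hodd : HasSum
      (fun k : ℕ => ((Nat.factorial (2 * k + 1) : ℂ))⁻¹ • ((-(z * Complex.I)) • G) ^ (2 * k + 1))
      ((-(Complex.sin z * Complex.I)) • G) := by
    have h := (((Complex.hasSum_sin' z).mul_right Complex.I).neg).smul_const G
    convert h using 2 with k
    rw [smul_pow, hG2', smul_smul, Odd.neg_pow ⟨k, rfl⟩]
    rw [div_mul_cancel₀ _ Complex.I_ne_zero]
    congr 1
    rw [div_eq_inv_mul]
    ring
  have hsum : HasSum (fun n : ℕ => ((Nat.factorial n : ℂ))⁻¹ • ((-(z * Complex.I)) • G) ^ n)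
      (Complex.cos z • (1 : Matrix (Fin N) (Fin N) ℂ) + (-(Complex.sin z * Complex.I)) • G) :=
    HasSum.even_add_odd
      (f := fun n : ℕ => ((Nat.factorial n : ℂ))⁻¹ • ((-(z * Complex.I)) • G) ^ n) heven hodd
  rw [NormedSpace.exp_eq_tsum (𝕂 := ℂ)]
  exact hsum.tsum_eq

/-- decomposition of the unitary conjugation of a Hermitian cost
operator `C` by a single-qubit rotation-like gate `M(x) = exp(−(ix/2)G)` with
involutory generator `G`: `M(x)† C M(x) = A + B cos x + D sin x` with
`A = (G†CG + C)/2`, `B = (C − G†CG)/2`, `D = (i/2)(G†C − CG)`. -/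
theorem rotation_conjugation_decomposition
    (N : ℕ) (G C : Matrix (Fin N) (Fin N) ℂ)
    (hG : G * G = 1) (hC : C.IsHermitian)
    (x : ℝ) :
    (NormedSpace.exp ((-(x : ℂ) * Complex.I / 2) • G))ᴴ * C
        * NormedSpace.exp ((-(x : ℂ) * Complex.I / 2) • G)
      = ((1 : ℂ) / 2) • (Gᴴ * C * G + C)
        + Complex.cos (x : ℂ) • (((1 : ℂ) / 2) • (C - Gᴴ * C * G))
        + Complex.sin (x : ℂ) • ((Complex.I / 2) • (Gᴴ * C - C * G)) := by
  have harg : (-(x : ℂ) * Complex.I / 2) • G = (-(((x : ℂ) / 2) * Complex.I)) • G := by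
    ring_nf
  rw [harg, exp_smul_involutory G hG ((x : ℂ) / 2)]
  set a : ℂ := Complex.cos ((x : ℂ) / 2) with ha
  set s : ℂ := Complex.sin ((x : ℂ) / 2) with hs
  have hconj2 : (starRingEnd ℂ) ((x : ℂ) / 2) = (x : ℂ) / 2 := by
    rw [map_div₀, Complex.conj_ofReal, Complex.conj_ofNat]
  have hconja : (starRingEnd ℂ) a = a := by
    rw [ha, ← Complex.cos_conj, hconj2]
  have hconjs : (starRingEnd ℂ) s = s := by
    rw [hs, ← Complex.sin_conj, hconj2]
  have hcx : Complex.cos (x : ℂ) = 2 * a ^ 2 - 1 := by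
    rw [ha, ← Complex.cos_two_mul]
    congr 1
    ring
  have hsx : Complex.sin (x : ℂ) = 2 * s * a := by
    rw [ha, hs, ← Complex.sin_two_mul]
    congr 1
    ring
  have hpy : s ^ 2 + a ^ 2 = 1 := Complex.sin_sq_add_cos_sq _
  rw [hcx, hsx]
  simp only [conjTranspose_add, conjTranspose_smul, conjTranspose_one, hconja, map_neg, _root_.map_mul,
    hconjs, Complex.conj_I, add_mul, mul_add, smul_mul_assoc, mul_smul_comm, smul_smul, one_mul,
    mul_one, Matrix.mul_assoc]
  match_scalars
  all_goals simp only [Complex.star_def, map_neg, _root_.map_mul, hconja, hconjs, Complex.conj_I]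
  · ring
  · ring
  · ring
  · linear_combination (-(s ^ 2)) * Complex.I_sq + hpy
end

section
/- Let g : ℝ → ℝ be of the form g(x) = a + b cos x + c sin x for real constants a, b, c. Then for every s ∈ ℝ with sin s ≠ 0 (i.e. s not an integer multiple of π) and every x ∈ ℝ, the parameter shift rule holds: g'(x) = (g(x+s) − g(x−s))/(2 sin s). -/
open Real

theorem hasDerivAt_const_add_mul_cos_add_mul_sin (a b c x : ℝ) :
    HasDerivAt (fun y => a + b * cos y + c * sin y) (c * cos x - b * sin x) x := by
  refine ((((hasDerivAt_cos x).const_mul b).const_add a).add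
    ((hasDerivAt_sin x).const_mul c)).congr_deriv ?_
  ring

theorem const_add_mul_cos_add_mul_sin_shift_sub (a b c s x : ℝ) :
    (a + b * cos (x + s) + c * sin (x + s)) - (a + b * cos (x - s) + c * sin (x - s)) =
      2 * sin s * (c * cos x - b * sin x) := by
  rw [cos_add, sin_add, cos_sub, sin_sub]
  ring

/-- the parameter shift rule. If `g(x) = a + b cos x + c sin x`, then
for any shift `s` with `sin s ≠ 0`, `g'(x) = (g(x+s) − g(x−s))/(2 sin s)`. -/
theorem parameter_shift_rule
    (a b c : ℝ) (g : ℝ → ℝ)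
    (hg : ∀ x, g x = a + b * Real.cos x + c * Real.sin x)
    (s : ℝ) (hs : Real.sin s ≠ 0) (x : ℝ) :
    deriv g x = (g (x + s) - g (x - s)) / (2 * Real.sin s) := by
  obtain rfl : g = fun y => a + b * cos y + c * sin y := funext hg
  rw [(hasDerivAt_const_add_mul_cos_add_mul_sin a b c x).deriv,
    const_add_mul_cos_add_mul_sin_shift_sub, mul_div_cancel_left₀ _ (mul_ne_zero two_ne_zero hs)]
end

section
/- Let g : ℝ → ℝ be of the form g(x) = a + b cos x + c sin x for real constants a, b, c, and let d ≥ 2 be an integer. Then for every x ∈ ℝ, the d-th derivative of g satisfies g^{(d)}(x) = Σ_{i=0}^{d} (−1)^{i+d} C(d,i) · g(x + 2πi/d − π) / (2 sin(π/d))^d, where C(d,i) is the binomial coefficient. -/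
/-! The derivative of `b cos + c sin` is its translate by `π/2`, so for `d ≥ 1` the `d`-th
derivative of `g` is that trigonometric part evaluated at `x + dπ/2`. On the other side the
alternating binomial sum kills the constant `a`, and `b cos y + c sin y = Re((b - ic) e^{iy})`
reduces the rest to the binomial theorem: with `u = e^{iθ}`,
`Σ (-1)^{i+d} C(d,i) e^{i(x + (2i - d)θ)} = e^{ix} (u - u⁻¹)^d = (2i sin θ)^d e^{ix}`,
and `i^d e^{ix} = e^{i(x + dπ/2)}`. Taking `θ = π/d` gives the shifts `x + 2πi/d - π`, and
`sin(π/d) > 0` for `d ≥ 2` allows the division. -/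

open Real Finset

theorem iteratedDeriv_cos_add_sin (n : ℕ) (b c x : ℝ) :
    iteratedDeriv n (fun y => b * cos y + c * sin y) x
      = b * cos (x + n * (π / 2)) + c * sin (x + n * (π / 2)) := by
  induction n generalizing b c with
  | zero => simp
  | succ n ih =>
    have hderiv : deriv (fun y => b * cos y + c * sin y) = fun y => c * cos y + -b * sin y := by
      ext y
      rw [(((hasDerivAt_cos y).const_mul b).fun_add ((hasDerivAt_sin y).const_mul c)).deriv]
      ring
    rw [iteratedDeriv_succ', hderiv, ih]
    have hshift : x + ↑(n + 1) * (π / 2) = x + n * (π / 2) + π / 2 := by push_cast; ring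
    rw [hshift, cos_add_pi_div_two, sin_add_pi_div_two]
    ring

theorem Complex.I_pow_mul_exp_mul_I (n : ℕ) (x : ℂ) :
    Complex.I ^ n * Complex.exp (x * Complex.I)
      = Complex.exp ((x + n * (π / 2)) * Complex.I) := by
  nth_rewrite 1 [← Complex.exp_pi_div_two_mul_I]
  rw [← Complex.exp_nat_mul, ← Complex.exp_add]
  ring_nf

theorem Complex.sum_neg_one_pow_choose_mul_exp (d : ℕ) (θ x : ℂ) :
    ∑ i ∈ range (d + 1),
        (-1) ^ (i + d) * d.choose i * Complex.exp ((x + 2 * θ * i - d * θ) * Complex.I)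
      = (2 * Complex.sin θ * Complex.I) ^ d * Complex.exp (x * Complex.I) := by
  have hsin : 2 * Complex.sin θ * Complex.I
      = Complex.exp (θ * Complex.I) - Complex.exp (-θ * Complex.I) := by
    rw [Complex.sin]
    linear_combination
      (Complex.exp (-θ * Complex.I) - Complex.exp (θ * Complex.I)) * Complex.I_sq
  set u := Complex.exp (θ * Complex.I)
  set v := Complex.exp (-θ * Complex.I)
  have hterm : ∀ i ∈ range (d + 1),
      (-1) ^ (i + d) * d.choose i * Complex.exp ((x + 2 * θ * i - d * θ) * Complex.I)
        = (-1) ^ d * Complex.exp (x * Complex.I)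
            * ((-u) ^ i * v ^ (d - i) * d.choose i) := by
    intro i hi
    have hexp : Complex.exp ((x + 2 * θ * i - d * θ) * Complex.I)
        = Complex.exp (x * Complex.I) * u ^ i * v ^ (d - i) := by
      rw [← Complex.exp_nat_mul, ← Complex.exp_nat_mul, ← Complex.exp_add,
        ← Complex.exp_add, Nat.cast_sub (Nat.lt_succ_iff.mp (mem_range.mp hi))]
      ring_nf
    rw [hexp, neg_pow, pow_add]
    ring
  rw [sum_congr rfl hterm, ← mul_sum, ← add_pow, hsin, show u - v = (-u + v) * (-1) by ring,
    mul_pow]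
  ring

theorem sum_neg_one_pow_add_mul_choose (d : ℕ) (hd : d ≠ 0) :
    ∑ i ∈ range (d + 1), (-1 : ℝ) ^ (i + d) * d.choose i = 0 := by
  have h : ∑ i ∈ range (d + 1), (-1 : ℝ) ^ i * d.choose i = 0 := by
    exact_mod_cast Int.alternating_sum_range_choose_of_ne hd
  simp_rw [pow_add, mul_right_comm _ ((-1 : ℝ) ^ d), ← sum_mul, h, zero_mul]

theorem sum_neg_one_pow_choose_mul_trig (d : ℕ) (hd : d ≠ 0) (a b c θ x : ℝ) :
    ∑ i ∈ range (d + 1), (-1 : ℝ) ^ (i + d) * d.choose i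
        * (a + b * cos (x + 2 * θ * i - d * θ) + c * sin (x + 2 * θ * i - d * θ))
      = (2 * sin θ) ^ d * (b * cos (x + d * (π / 2)) + c * sin (x + d * (π / 2))) := by
  set w : ℂ := b - c * Complex.I
  have htrig (y : ℝ) : b * cos y + c * sin y = (w * Complex.exp (y * Complex.I)).re := by
    simp [w, Complex.mul_re, Complex.exp_ofReal_mul_I_re, Complex.exp_ofReal_mul_I_im]
  calc _ = a * ∑ i ∈ range (d + 1), (-1 : ℝ) ^ (i + d) * d.choose i
        + ∑ i ∈ range (d + 1), (-1 : ℝ) ^ (i + d) * d.choose i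
            * (b * cos (x + 2 * θ * i - d * θ) + c * sin (x + 2 * θ * i - d * θ)) := by
        rw [mul_sum, ← sum_add_distrib]
        exact sum_congr rfl fun i _ => by ring
    _ = (w * ∑ i ∈ range (d + 1), (-1) ^ (i + d) * d.choose i
          * Complex.exp ((x + 2 * θ * i - d * θ) * Complex.I)).re := by
        rw [sum_neg_one_pow_add_mul_choose d hd, mul_zero, zero_add, mul_sum, Complex.re_sum]
        refine sum_congr rfl fun i _ => ?_
        rw [htrig, ← Complex.re_ofReal_mul]
        push_cast
        ring_nf
    _ = ((((2 * sin θ) ^ d : ℝ) : ℂ)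
          * (w * Complex.exp ((x + d * (π / 2) : ℝ) * Complex.I))).re := by
        rw [Complex.sum_neg_one_pow_choose_mul_exp, mul_pow, mul_left_comm, mul_assoc,
          mul_left_comm _ w, Complex.I_pow_mul_exp_mul_I]
        push_cast
        rfl
    _ = _ := by rw [Complex.re_ofReal_mul, htrig]

/-- iterated parameter shift rule. If `g(x) = a + b cos x + c sin x`
and `d ≥ 2`, then
`g^{(d)}(x) = Σ_{i=0}^{d} (−1)^{i+d} C(d,i) g(x + 2πi/d − π) / (2 sin(π/d))^d`. -/
theorem iterated_parameter_shift_rule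
    (a b c : ℝ) (g : ℝ → ℝ)
    (hg : ∀ x, g x = a + b * Real.cos x + c * Real.sin x)
    (d : ℕ) (hd : 2 ≤ d) (x : ℝ) :
    iteratedDeriv d g x
      = ∑ i ∈ Finset.range (d + 1),
          (-1 : ℝ) ^ (i + d) * (d.choose i)
            * g (x + 2 * Real.pi * i / d - Real.pi)
            / (2 * Real.sin (Real.pi / d)) ^ d := by
  have hd0 : d ≠ 0 := by omega
  have hsin : 0 < sin (π / d) :=
    sin_pos_of_pos_of_lt_pi (by positivity) (div_lt_self pi_pos (by exact_mod_cast hd))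
  have hderiv : iteratedDeriv d g x = b * cos (x + d * (π / 2)) + c * sin (x + d * (π / 2)) := by
    rw [show g = fun y => a + (b * cos y + c * sin y) from funext fun y => by rw [hg, add_assoc],
      iteratedDeriv_const_add (Nat.pos_of_ne_zero hd0), iteratedDeriv_cos_add_sin]
  have hshift (i : ℕ) : x + 2 * π * i / d - π = x + 2 * (π / d) * i - d * (π / d) := by
    field_simp
  rw [← sum_div, eq_div_iff (by positivity), hderiv]
  simp_rw [hg, hshift]
  rw [sum_neg_one_pow_choose_mul_trig d hd0, mul_comm]
end

section
/- Let g : ℝ → ℝ be of the form g(x) = a + b cos x + c sin x for real constants a, b, c, and let d ≥ 2 be an integer. Then for every x ∈ ℝ, g^{(d)}(x) = (2 sin(π/d))^{−d} · [ (1 + (−1)^d) g(x + π) + Σ_{i=1}^{d−1} (−1)^{i+d} C(d,i) g(x + 2πi/d − π) ], where C(d,i) is the binomial coefficient. In particular, the d-th unmixed derivative can be computed from at most d evaluations of g. -/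
/-!
Write `g t = a + Re (w e^{it})` with `w = b - ic`. Differentiation multiplies `w` by `i`, and the
forward difference with step `h` multiplies it by `e^{ih} - 1`. For `h = 2π/d` one has
`(e^{ih} - 1)^d = e^{iπ} (2i sin(π/d))^d`, so the `d`-th forward difference of `g` at `x - π` is
`(2 sin(π/d))^d g^{(d)}(x)`. Expanding that difference binomially and merging its two end terms,
`g (x - π) = g (x + π)`, gives the right-hand side.
-/

open Complex Finset
open scoped Real fwdDiff

lemma fwdDiff_iter_const_add {M G : Type*} [AddCommMonoid M] [AddCommGroup G] (h : M) (a : G)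
    (f : M → G) {n : ℕ} (hn : n ≠ 0) :
    (Δ_[h])^[n] (fun t => a + f t) = (Δ_[h])^[n] f := by
  obtain ⟨m, rfl⟩ := Nat.exists_eq_succ_of_ne_zero hn
  rw [Function.iterate_succ_apply, Function.iterate_succ_apply]
  congr 1
  ext t
  simp only [fwdDiff, add_sub_add_left_eq_sub]

lemma fwdDiff_iter_two_pi_div_sub_pi (g : ℝ → ℝ) (x : ℝ) {d : ℕ} (hd : d ≠ 0)
    (hg : g (x - π) = g (x + π)) :
    (Δ_[2 * π / d])^[d] g (x - π) = (1 + (-1 : ℝ) ^ d) * g (x + π)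
      + ∑ i ∈ Ico 1 d, (-1 : ℝ) ^ (i + d) * d.choose i * g (x + 2 * π * i / d - π) := by
  rw [fwdDiff_iter_eq_sum_shift, sum_range_succ, sum_range_eq_add_Ico _ (Nat.pos_of_ne_zero hd)]
  have hsign (i : ℕ) (hi : i ∈ Ico 1 d) : (-1 : ℝ) ^ (d - i) = (-1) ^ (i + d) := by
    rw [show i + d = d - i + 2 * i by grind, pow_add, pow_mul, neg_one_sq, one_pow, mul_one]
  have hshift (i : ℕ) : x - π + i * (2 * π / d) = x + 2 * π * i / d - π := by ring
  have hlast : x - π + d * (2 * π / d) = x + π := by field_simp; ring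
  simp only [zsmul_eq_mul, Int.cast_mul, Int.cast_pow, Int.cast_neg, Int.cast_one,
    Int.cast_natCast, Nat.sub_zero, Nat.sub_self, Nat.choose_zero_right, Nat.choose_self,
    Nat.cast_one, zero_smul, add_zero, nsmul_eq_mul, hlast, hg]
  rw [sum_congr rfl fun i hi => by rw [hsign i hi, hshift]]
  ring

lemma re_sub_mul_I_mul_exp_mul_I (b c x : ℝ) :
    (((b : ℂ) - c * I) * exp (x * I)).re = b * Real.cos x + c * Real.sin x := by
  simp [exp_mul_I, mul_re, ← ofReal_cos, ← ofReal_sin]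

lemma deriv_re_mul_exp_mul_I (w : ℂ) :
    deriv (fun t : ℝ => (w * exp (t * I)).re) = fun t : ℝ => (I * w * exp (t * I)).re := by
  funext t
  have h : HasDerivAt (fun z : ℂ => w * exp (z * I)) (w * (exp (t * I) * I)) t :=
    ((hasDerivAt_mul_const I).cexp).const_mul w
  rw [h.real_of_complex.deriv]
  ring_nf

lemma iteratedDeriv_re_mul_exp_mul_I (n : ℕ) (w : ℂ) :
    iteratedDeriv n (fun t : ℝ => (w * exp (t * I)).re) =
      fun t : ℝ => (I ^ n * w * exp (t * I)).re := by
  induction n generalizing w with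
  | zero => simp
  | succ n ih => rw [iteratedDeriv_succ', deriv_re_mul_exp_mul_I, ih, pow_succ, mul_assoc (I ^ n)]

lemma fwdDiff_re_mul_exp_mul_I (h : ℝ) (w : ℂ) :
    Δ_[h] (fun t : ℝ => (w * exp (t * I)).re) =
      fun t : ℝ => ((exp (h * I) - 1) * w * exp (t * I)).re := by
  funext t
  rw [fwdDiff, ← sub_re, ofReal_add, add_mul, exp_add]
  ring_nf

lemma fwdDiff_iter_re_mul_exp_mul_I (h : ℝ) (n : ℕ) (w : ℂ) :
    (Δ_[h])^[n] (fun t : ℝ => (w * exp (t * I)).re) =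
      fun t : ℝ => ((exp (h * I) - 1) ^ n * w * exp (t * I)).re := by
  induction n generalizing w with
  | zero => simp
  | succ n ih =>
    rw [Function.iterate_succ_apply, fwdDiff_re_mul_exp_mul_I, ih, pow_succ, mul_assoc (_ ^ n)]

lemma exp_two_mul_mul_I_sub_one (θ : ℂ) :
    exp (2 * θ * I) - 1 = exp (θ * I) * (2 * sin θ * I) := by
  have hsq : exp (2 * θ * I) = exp (θ * I) ^ 2 := by rw [← exp_nat_mul]; ring_nf
  have hinv : exp (θ * I) * exp (-θ * I) = 1 := by rw [← exp_add]; ring_nf; exact exp_zero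
  linear_combination hsq + (-exp (θ * I) * I) * two_sin θ
    - (exp (θ * I) * exp (-θ * I) - exp (θ * I) ^ 2) * I_sq + hinv

lemma exp_two_pi_div_mul_I_sub_one_pow {d : ℕ} (hd : d ≠ 0) :
    (exp ((2 * π / d : ℝ) * I) - 1) ^ d = -(((2 * Real.sin (π / d)) ^ d : ℝ) * I ^ d) := by
  have hθ : ((2 * π / d : ℝ) : ℂ) = 2 * ((π / d : ℝ) : ℂ) := by push_cast; ring
  have hpow : exp ((π / d : ℝ) * I) ^ d = -1 := by
    rw [← exp_nat_mul, ← exp_pi_mul_I]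
    congr 1
    push_cast
    field_simp
  rw [hθ, exp_two_mul_mul_I_sub_one, mul_pow, hpow, ← ofReal_sin]
  push_cast
  ring

lemma fwdDiff_iter_two_pi_div_re_mul_exp_mul_I {d : ℕ} (hd : d ≠ 0) (w : ℂ) (x : ℝ) :
    (Δ_[2 * π / d])^[d] (fun t : ℝ => (w * exp (t * I)).re) (x - π) =
      (2 * Real.sin (π / d)) ^ d * iteratedDeriv d (fun t : ℝ => (w * exp (t * I)).re) x := by
  rw [fwdDiff_iter_re_mul_exp_mul_I, iteratedDeriv_re_mul_exp_mul_I,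
    exp_two_pi_div_mul_I_sub_one_pow hd, ← re_ofReal_mul]
  beta_reduce
  rw [show ((x - π : ℝ) : ℂ) * I = x * I - π * I by push_cast; ring, exp_sub, exp_pi_mul_I]
  congr 1
  push_cast
  ring

/-- reduced iterated parameter shift rule (using `2π`-periodicity).
If `g(x) = a + b cos x + c sin x` and `d ≥ 2`, then
`g^{(d)}(x) = (2 sin(π/d))^{−d} [(1 + (−1)^d) g(x+π)
  + Σ_{i=1}^{d−1} (−1)^{i+d} C(d,i) g(x + 2πi/d − π)]`,
so the `d`-th unmixed derivative needs at most `d` evaluations of `g`. -/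
theorem reduced_iterated_parameter_shift_rule
    (a b c : ℝ) (g : ℝ → ℝ)
    (hg : ∀ x, g x = a + b * Real.cos x + c * Real.sin x)
    (d : ℕ) (hd : 2 ≤ d) (x : ℝ) :
    iteratedDeriv d g x
      = ((2 * Real.sin (Real.pi / d)) ^ d)⁻¹
          * ((1 + (-1 : ℝ) ^ d) * g (x + Real.pi)
            + ∑ i ∈ Finset.Ico 1 d,
                (-1 : ℝ) ^ (i + d) * (d.choose i)
                  * g (x + 2 * Real.pi * i / d - Real.pi)) := by
  have hd0 : d ≠ 0 := by omega
  have hgw : g = fun t : ℝ => a + ((b - c * I) * exp (t * I)).re :=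
    funext fun t => by rw [hg, re_sub_mul_I_mul_exp_mul_I, add_assoc]
  have hperiodic : g (x - π) = g (x + π) := by
    simp only [hg, Real.cos_sub_pi, Real.cos_add_pi, Real.sin_sub_pi, Real.sin_add_pi]
  have hshift : (Δ_[2 * π / d])^[d] g (x - π) = (2 * Real.sin (π / d)) ^ d * iteratedDeriv d g x := by
    rw [hgw, fwdDiff_iter_const_add _ _ _ hd0, iteratedDeriv_const_add (Nat.pos_of_ne_zero hd0),
      fwdDiff_iter_two_pi_div_re_mul_exp_mul_I hd0]
  have hsin : (2 * Real.sin (π / d)) ^ d ≠ 0 := by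
    have hd1 : (1 : ℝ) < d := by exact_mod_cast hd
    exact pow_ne_zero _ (mul_ne_zero two_ne_zero
      (Real.sin_pos_of_pos_of_lt_pi (by positivity) (div_lt_self Real.pi_pos hd1)).ne')
  rw [← fwdDiff_iter_two_pi_div_sub_pi g x hd0 hperiodic, hshift, inv_mul_cancel_left₀ hsin]
end

section
/- Let g : ℝ² → ℝ be of the form g(x, y) = Σ_{k=0}^{2} Σ_{l=0}^{2} c_{k,l} φ_k(x) φ_l(y), where φ₀ ≡ 1, φ₁ = cos, φ₂ = sin and c_{k,l} ∈ ℝ. Then for every s ∈ ℝ with sin s ≠ 0 and every (x, y) ∈ ℝ², the mixed second partial derivative satisfies ∂²g/∂x∂y (x, y) = [g(x+s, y+s) − g(x−s, y+s) − g(x+s, y−s) + g(x−s, y−s)] / (4 sin² s). -/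
/-- The basis functions `1, cos, sin`. -/
noncomputable def trigBasis : Fin 3 → ℝ → ℝ := ![fun _ => 1, Real.cos, Real.sin]

/-- mixed second-derivative parameter shift rule. If
`g(x,y) = Σ_{k,l} c_{k,l} φ_k(x) φ_l(y)` with `φ₀ ≡ 1, φ₁ = cos, φ₂ = sin`, then for
any `s` with `sin s ≠ 0`,
`∂²g/∂x∂y = [g(x+s,y+s) − g(x−s,y+s) − g(x+s,y−s) + g(x−s,y−s)]/(4 sin² s)`. -/
theorem mixed_parameter_shift_rule
    (c : Fin 3 → Fin 3 → ℝ) (g : ℝ → ℝ → ℝ)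
    (hg : ∀ x y, g x y = ∑ k : Fin 3, ∑ l : Fin 3, c k l * trigBasis k x * trigBasis l y)
    (s : ℝ) (hs : Real.sin s ≠ 0) (x y : ℝ) :
    deriv (fun x' => deriv (fun y' => g x' y') y) x
      = (g (x + s) (y + s) - g (x - s) (y + s) - g (x + s) (y - s) + g (x - s) (y - s))
          / (4 * Real.sin s ^ 2) := by
  have hd1 : ∀ x', deriv (fun y' => g x' y') y =
      (c 0 1 + c 1 1 * Real.cos x' + c 2 1 * Real.sin x') * (-Real.sin y)
      + (c 0 2 + c 1 2 * Real.cos x' + c 2 2 * Real.sin x') * Real.cos y := by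
    intro x'
    have hfun : (fun y' => g x' y') = fun y' =>
        (c 0 0 + c 1 0 * Real.cos x' + c 2 0 * Real.sin x')
        + (c 0 1 + c 1 1 * Real.cos x' + c 2 1 * Real.sin x') * Real.cos y'
        + (c 0 2 + c 1 2 * Real.cos x' + c 2 2 * Real.sin x') * Real.sin y' := by
      funext y'
      simp [hg, trigBasis, Fin.sum_univ_three]
      ring
    rw [hfun]
    have h : HasDerivAt (fun y' =>
        (c 0 0 + c 1 0 * Real.cos x' + c 2 0 * Real.sin x')
        + (c 0 1 + c 1 1 * Real.cos x' + c 2 1 * Real.sin x') * Real.cos y'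
        + (c 0 2 + c 1 2 * Real.cos x' + c 2 2 * Real.sin x') * Real.sin y')
        ((c 0 1 + c 1 1 * Real.cos x' + c 2 1 * Real.sin x') * (-Real.sin y)
          + (c 0 2 + c 1 2 * Real.cos x' + c 2 2 * Real.sin x') * Real.cos y) y := by
      have := ((hasDerivAt_const y (c 0 0 + c 1 0 * Real.cos x' + c 2 0 * Real.sin x')).add
        ((Real.hasDerivAt_cos y).const_mul (c 0 1 + c 1 1 * Real.cos x' + c 2 1 * Real.sin x'))).add
        ((Real.hasDerivAt_sin y).const_mul (c 0 2 + c 1 2 * Real.cos x' + c 2 2 * Real.sin x'))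
      exact this.congr_deriv (by ring)
    exact h.deriv
  have hfun2 : (fun x' => deriv (fun y' => g x' y') y) = fun x' =>
      (c 0 1 + c 1 1 * Real.cos x' + c 2 1 * Real.sin x') * (-Real.sin y)
      + (c 0 2 + c 1 2 * Real.cos x' + c 2 2 * Real.sin x') * Real.cos y := by
    funext x'; exact hd1 x'
  rw [hfun2]
  have h2 : HasDerivAt (fun x' =>
      (c 0 1 + c 1 1 * Real.cos x' + c 2 1 * Real.sin x') * (-Real.sin y)
      + (c 0 2 + c 1 2 * Real.cos x' + c 2 2 * Real.sin x') * Real.cos y)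
      ((c 1 1 * (-Real.sin x) + c 2 1 * Real.cos x) * (-Real.sin y)
        + (c 1 2 * (-Real.sin x) + c 2 2 * Real.cos x) * Real.cos y) x := by
    have := (((((hasDerivAt_const x (c 0 1)).add
        ((Real.hasDerivAt_cos x).const_mul (c 1 1))).add
        ((Real.hasDerivAt_sin x).const_mul (c 2 1))).mul_const (-Real.sin y)).add
      ((((hasDerivAt_const x (c 0 2)).add
        ((Real.hasDerivAt_cos x).const_mul (c 1 2))).add
        ((Real.hasDerivAt_sin x).const_mul (c 2 2))).mul_const (Real.cos y)))
    exact this.congr_deriv (by ring)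
  rw [h2.deriv]
  simp only [hg, trigBasis, Fin.sum_univ_three, Matrix.cons_val_zero, Matrix.cons_val_one,
    Matrix.head_cons, Matrix.cons_val_two, Matrix.tail_cons, Real.cos_add, Real.sin_add,
    Real.cos_sub, Real.sin_sub]
  field_simp
  ring
end
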